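/- In an almost Hausdorff topological space Y (every nonempty closed subset contains a nonempty relatively open Hausdorff subset), every singleton {y} is locally closed, i.e. open in its closure. -/
import Mathlib


/-- In an almost Hausdorff space (every nonempty closed subset contains a nonempty
relatively open Hausdorff subset), every singleton is locally closed. -/
theorem stmt_18 {Y : Type*} [TopologicalSpace Y]
    (hY : ∀ F : Set Y, IsClosed F → F.Nonempty →
      ∃ U : Set Y, U ⊆ F ∧ U.Nonempty ∧ (∃ V : Set Y, IsOpen V ∧ U = V ∩ F) ∧ T2Space U) :
    ∀ y : Y, IsLocallyClosed ({y} : Set Y) := by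
  intro y
  obtain ⟨U, hUF, ⟨u, hu⟩, ⟨V, hV, rfl⟩, hT2⟩ :=
    hY (closure {y}) isClosed_closure ⟨y, subset_closure rfl⟩
  have hyV : y ∈ V := by
    obtain ⟨w, hwV, hwy⟩ := mem_closure_iff.mp hu.2 V hV hu.1
    rwa [Set.mem_singleton_iff.mp hwy] at hwV
  have hyU : y ∈ V ∩ closure {y} := ⟨hyV, subset_closure rfl⟩
  have key : V ∩ closure {y} = {y} := by
    apply Set.Subset.antisymm
    · intro z hz
      by_contra hzy
      have hne : (⟨z, hz⟩ : ↥(V ∩ closure {y})) ≠ ⟨y, hyU⟩ := by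
        simpa [Subtype.ext_iff] using hzy
      obtain ⟨A, B, hA, hB, hzA, hyB, hAB⟩ := t2_separation hne
      obtain ⟨W, hW, hWA⟩ := isOpen_induced_iff.mp hA
      have hzW : z ∈ W := by rw [← hWA] at hzA; exact hzA
      obtain ⟨w, hw, hwy⟩ := mem_closure_iff.mp hz.2 (W ∩ V) (hW.inter hV) ⟨hzW, hz.1⟩
      have hyW : y ∈ W := by rw [Set.mem_singleton_iff.mp hwy] at hw; exact hw.1
      have : (⟨y, hyU⟩ : ↥(V ∩ closure {y})) ∈ A := by rw [← hWA]; exact hyW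
      exact hAB.ne_of_mem this hyB rfl
    · intro z hz
      rw [Set.mem_singleton_iff.mp hz]
      exact hyU
  exact ⟨V, closure {y}, hV, isClosed_closure, key.symm⟩
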